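/- Let p be a prime number and (A,+,∘) a left brace of cardinality p^n with p > n+1. Then for all a,b ∈ A the element (p·a)*b lies in pA, and the rule [a]⊙[b] := [℘^{-1}((p·a)*b)] is a well-defined binary operation on A/ann(p^2): if a−a′ ∈ ann(p^2), b−b′ ∈ ann(p^2), and c, c′ ∈ A satisfy p·c = (p·a)*b and p·c′ = (p·a′)*b′, then c−c′ ∈ ann(p^2). -/

import Mathlib

universe u

/-- A left brace: `(A,+)` abelian group, `(A,∘)` a group, with
`a∘(b+c)+a = a∘b+a∘c`. -/
structure LeftBrace (A : Type u) [AddCommGroup A] where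
  circ : A → A → A
  one : A
  inv : A → A
  circ_assoc : ∀ a b c : A, circ (circ a b) c = circ a (circ b c)
  one_circ : ∀ a : A, circ one a = a
  circ_one : ∀ a : A, circ a one = a
  inv_circ : ∀ a : A, circ (inv a) a = one
  circ_add : ∀ a b c : A, circ a (b + c) + a = circ a b + circ a c

/-- `a*b = a∘b - a - b`. -/
def LeftBrace.star {A : Type u} [AddCommGroup A] (B : LeftBrace A) (a b : A) : A :=
  B.circ a b - a - b

/-- `ann(k) = {a : k•a = 0}`, as an additive subgroup. -/
def annSub (A : Type u) [AddCommGroup A] (k : ℕ) : AddSubgroup A where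
  carrier := {a : A | k • a = 0}
  zero_mem' := by simp
  add_mem' := by
    intro a b ha hb
    have ha' : k • a = 0 := ha
    have hb' : k • b = 0 := hb
    show k • (a + b) = 0
    rw [smul_add, ha', hb', add_zero]
  neg_mem' := by
    intro a ha
    have ha' : k • a = 0 := ha
    show k • (-a) = 0
    rw [smul_neg, ha', neg_zero]

/-- The coset `[a]` of `a` in `A/ann(k)`. -/
def qmk {A : Type u} [AddCommGroup A] (k : ℕ) (a : A) : A ⧸ annSub A k :=
  QuotientAddGroup.mk a

/-- Evaluation of a non-associative word under a binary operation `op`,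
substituting `f i` for the variable `i`. -/
def wEval {α : Type*} {β : Type*} (op : β → β → β) (f : α → β) : FreeMagma α → β
  | FreeMagma.of a => f a
  | FreeMagma.mul x y => op (wEval op f x) (wEval op f y)

/-- The list of leaves (occurrences of variables, left to right) of a word. -/
def wLeaves {α : Type*} : FreeMagma α → List α
  | FreeMagma.of a => [a]
  | FreeMagma.mul x y => wLeaves x ++ wLeaves y

/-- The last (rightmost) variable of a word. -/
def wLast {α : Type*} : FreeMagma α → α
  | FreeMagma.of a => a
  | FreeMagma.mul _ y => wLast y

/-- The number of occurrences of the variable `a` in a word. -/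
def wCount {α : Type*} [DecidableEq α] (a : α) : FreeMagma α → ℕ
  | FreeMagma.of b => if b = a then 1 else 0
  | FreeMagma.mul x y => wCount a x + wCount a y

/-- The length (number of variable occurrences) of a word. -/
def wLen {α : Type*} : FreeMagma α → ℕ
  | FreeMagma.of _ => 1
  | FreeMagma.mul x y => wLen x + wLen y

/-- Left-normed product `a₁·(a₂·(⋯(aₘ·b)⋯))`. -/
def leftProd {Q : Type*} (mul : Q → Q → Q) : List Q → Q → Q
  | [], b => b
  | a :: l, b => mul a (leftProd mul l b)

/-- `circPow B a k` is the product of `k` copies of `a` under `∘`. -/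
def circPow {A : Type u} [AddCommGroup A] (B : LeftBrace A) (a : A) : ℕ → A
  | 0 => B.one
  | k + 1 => B.circ a (circPow B a k)

/-- `eSeq B a (i-1)` is `a_i`, where `a_1 = a` and `a_{i+1} = a * a_i`. -/
def eSeq {A : Type u} [AddCommGroup A] (B : LeftBrace A) (a : A) : ℕ → A
  | 0 => a
  | i + 1 => B.star a (eSeq B a i)

/-- `starIter B a b (i-1)` is `e_i`, where `e_1 = a*b` and `e_{i+1} = a*e_i`. -/
def starIter {A : Type u} [AddCommGroup A] (B : LeftBrace A) (a b : A) : ℕ → A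
  | 0 => B.star a b
  | i + 1 => B.star a (starIter B a b i)

/-- `iterOp op u v i` is `u ⊙ (u ⊙ (⋯ (u ⊙ v)))` with `i` applications of `u ⊙ ·`. -/
def iterOp {Q : Type*} (op : Q → Q → Q) (u v : Q) : ℕ → Q
  | 0 => v
  | i + 1 => op u (iterOp op u v i)

/-- `f(a) = Σ_{i=1}^{p−1} (C(p−1,i−1)/i)·e_i` where `e_1 = a`, `e_{i+1} = a*e_i`. -/
def fMap {A : Type u} [AddCommGroup A] (B : LeftBrace A) (p : ℕ) (a : A) : A :=
  ∑ i ∈ Finset.Icc 1 (p - 1), (Nat.choose (p - 1) (i - 1) / i) • eSeq B a (i - 1)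

/-- `braceChainAux B (i-1)` is `A^i`: `A^1 = A`, `A^{i+1}` the additive subgroup
generated by `{x*y : x ∈ A, y ∈ A^i}`. -/
def braceChainAux {A : Type u} [AddCommGroup A] (B : LeftBrace A) : ℕ → AddSubgroup A
  | 0 => ⊤
  | i + 1 => AddSubgroup.closure {z : A | ∃ x : A, ∃ y ∈ braceChainAux B i, z = B.star x y}

/-- `dSeq B a b i = (d_i, d_i')`: `d_0 = a`, `d_0' = b`, `d_{i+1} = d_i + d_i'`,
`d_{i+1}' = d_i * d_i'`. -/
def dSeq {A : Type u} [AddCommGroup A] (B : LeftBrace A) (a b : A) : ℕ → A × A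
  | 0 => (a, b)
  | i + 1 => ((dSeq B a b i).1 + (dSeq B a b i).2, B.star (dSeq B a b i).1 (dSeq B a b i).2)

/-!
Write `λ_a b = a ∘ b - a`, so that `a * b = (λ_a - 1) b` and `a ↦ λ_a` is a homomorphism from
the `p`-group `(A, ∘)` to `AddMonoid.End A`. Fixed points of this action modulo an invariant
subgroup give an ascending series `0 = S₀ < S₁ < ⋯ < Sₙ = A` with `A * Sᵢ₊₁ ⊆ Sᵢ`, hence
`(λ_a - 1) ^ n = 0`. As `n < p`, the coefficients `C(p^s, k)`, `0 < k ≤ n`, are divisible by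
`p^s`, so `∑_{j < p^s} λ_a ^ j = p^s • u` with `u` a unit of the form `1 + (λ_a - 1) * ⋯`.

If `p^s • a = 0`, then `a^{∘p^s} = u (p^s • a) = 0`, so `λ_a ^ p^s = 1` and `p^s • (λ_a - 1) = 0`:
`ann(p^s)` absorbs `*` from the left. For `v ∈ Sⱼ₊₁`, `v^{∘p} = p • (v + w)` with `w ∈ Sⱼ`, so
`p • v = v^{∘p} ∘ (p • u')` for some `u' ∈ Sⱼ` and `λ_{p•v} = λ_v ^ p * λ_{p•u'}`; induction along
the series gives `λ_{p•a} = 1 + p • Θ`, i.e. `(p • a) * b = p • Θ b` with `Θ` additive. Then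
`p • ((p • a) * (b - b')) = Θ (p² • (b - b')) = 0`, while `p • ((p • a) * b' - (p • a') * b') = 0`
because `p • a - p • a' ∈ ann(p)`.
-/

open Finset

theorem geom_sum_one_add_eq_sum_choose_smul {R : Type*} [Semiring R] (x : R) (m : ℕ) :
    ∑ j ∈ range m, (1 + x) ^ j = ∑ i ∈ range m, m.choose (i + 1) • x ^ i := by
  simpa [Polynomial.aeval_comp, add_comm, nsmul_eq_mul] using
    congrArg (Polynomial.aeval x) (Polynomial.geom_sum_X_comp_X_add_one_eq_sum (R := ℕ) m)

theorem Nat.Prime.pow_dvd_choose_pow {p k : ℕ} (hp : p.Prime) (hk : k ≠ 0) (hkp : k < p)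
    (s : ℕ) : p ^ s ∣ (p ^ s).choose k := by
  obtain ⟨k, rfl⟩ := Nat.exists_eq_succ_of_ne_zero hk
  have h := Nat.add_one_mul_choose_eq (p ^ s - 1) k
  rw [Nat.sub_add_cancel (pow_pos hp.pos s)] at h
  exact (Nat.Coprime.pow_left s (Nat.coprime_of_lt_prime hk hkp hp)).dvd_of_dvd_mul_right
    ⟨_, h.symm⟩

theorem Nat.Prime.dvd_of_ne_one_of_dvd_pow {p n d : ℕ} (hp : p.Prime) (hd : d ∣ p ^ n)
    (h1 : d ≠ 1) : p ∣ d := by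
  obtain ⟨k, -, rfl⟩ := (Nat.dvd_prime_pow hp).mp hd
  exact dvd_pow_self p (by rintro rfl; exact h1 (pow_zero p))

theorem exists_geom_sum_one_add_eq {R : Type*} [Ring R] {p n : ℕ} (hp : p.Prime) (hnp : n < p)
    {x : R} (hx : x ^ n = 0) (s : ℕ) :
    ∃ c : ℕ → ℕ, ∑ j ∈ range (p ^ s), (1 + x) ^ j =
      p ^ s • (1 + x * ∑ i ∈ range (p ^ s), c i • x ^ i) := by
  set q := p ^ s
  refine ⟨fun i => q.choose (i + 2) / q, ?_⟩
  have hterm (i : ℕ) :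
      q.choose (i + 2) • x ^ (i + 1) = q • ((q.choose (i + 2) / q) • x ^ (i + 1)) := by
    rcases lt_or_ge (i + 1) n with h | h
    · rw [smul_smul, Nat.mul_div_cancel' (hp.pow_dvd_choose_pow (by omega) (by omega) s)]
    · rw [pow_eq_zero_of_le h hx, smul_zero, smul_zero, smul_zero]
  calc ∑ j ∈ range q, (1 + x) ^ j = ∑ i ∈ range (q + 1), q.choose (i + 1) • x ^ i := by
        rw [geom_sum_one_add_eq_sum_choose_smul, sum_range_succ, Nat.choose_succ_self, zero_smul,
          add_zero]
    _ = ∑ i ∈ range q, q.choose (i + 2) • x ^ (i + 1) + q • 1 := by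
        rw [sum_range_succ', Nat.choose_one_right, pow_zero]
    _ = q • (1 + x * ∑ i ∈ range q, (q.choose (i + 2) / q) • x ^ i) := by
        simp only [hterm, ← smul_sum, mul_sum, mul_smul_comm, ← pow_succ', smul_add, add_comm]

theorem isUnit_one_add_mul_sum_smul_pow {R : Type*} [Ring R] {x : R} (hx : IsNilpotent x)
    (c : ℕ → ℕ) (m : ℕ) : IsUnit (1 + x * ∑ i ∈ range m, c i • x ^ i) :=
  (Commute.isNilpotent_mul_right (Commute.sum_right _ _ _ fun i _ =>
    ((Commute.refl x).pow_right i).smul_right (c i)) hx).isUnit_one_add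

theorem IsPGroup.exists_smul_sub_mem_of_dvd_index {p : ℕ} [Fact p.Prime] {G M : Type*} [Group G]
    [AddCommGroup M] [DistribMulAction G M] [Finite M] (hG : IsPGroup p G) (S : AddSubgroup M)
    (hS : ∀ g : G, ∀ y ∈ S, g • y ∈ S) (hpS : p ∣ S.index) :
    ∃ y ∉ S, ∀ g : G, g • y - y ∈ S := by
  let smulHom (g : G) : M ⧸ S →+ M ⧸ S :=
    QuotientAddGroup.map S S (DistribSMul.toAddMonoidHom M g) (hS g)
  let _ : MulAction G (M ⧸ S) :=
    { smul g := smulHom g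
      one_smul q := QuotientAddGroup.induction_on q fun y => congrArg _ (one_smul G y)
      mul_smul g h q := QuotientAddGroup.induction_on q fun y => congrArg _ (mul_smul g h y) }
  obtain ⟨b, hb, hb0⟩ := hG.exists_fixed_point_of_prime_dvd_card_of_fixed_point (M ⧸ S)
    (S.index_eq_card ▸ hpS) (a := 0) fun g => map_zero (smulHom g)
  obtain ⟨y, rfl⟩ := QuotientAddGroup.mk_surjective b
  refine ⟨y, fun hy => hb0 ((QuotientAddGroup.eq_zero_iff y).mpr hy).symm, fun g => ?_⟩
  exact (QuotientAddGroup.eq_iff_sub_mem).mp (hb g)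

theorem mem_annSub {A : Type u} [AddCommGroup A] {k : ℕ} {x : A} :
    x ∈ annSub A k ↔ k • x = 0 :=
  Iff.rfl

theorem map_mem_annSub {A A' : Type u} [AddCommGroup A] [AddCommGroup A'] (f : A →+ A') {k : ℕ}
    {x : A} (hx : x ∈ annSub A k) : f x ∈ annSub A' k :=
  (map_nsmul f k x).symm.trans ((congrArg f hx).trans (map_zero f))

namespace LeftBrace

variable {A : Type u} [AddCommGroup A] (B : LeftBrace A)

theorem circ_zero (a : A) : B.circ a 0 = a := by
  have h := B.circ_add a 0 0
  rw [add_zero] at h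
  exact (add_left_cancel h).symm

theorem one_eq_zero : B.one = 0 := by
  simpa only [B.one_circ] using (B.circ_zero B.one).symm

/-- `λ_a b = a ∘ b - a`; the brace axiom is exactly the additivity of `λ_a`. -/
def lam (a : A) : AddMonoid.End A :=
  AddMonoidHom.mk' (fun b => B.circ a b - a) fun b c => by
    rw [eq_sub_of_add_eq (B.circ_add a b c)]
    abel

theorem lam_apply (a b : A) : B.lam a b = B.circ a b - a := rfl

theorem circ_eq_add_lam (a b : A) : B.circ a b = a + B.lam a b := by
  rw [lam_apply, add_sub_cancel]

theorem star_eq_lam_sub (a b : A) : B.star a b = B.lam a b - b := rfl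

theorem lam_sub_one_apply (a b : A) : (B.lam a - 1) b = B.star a b := rfl

theorem star_sub_right (x y z : A) : B.star x (y - z) = B.star x y - B.star x z :=
  map_sub (B.lam x - 1) y z

theorem lam_zero : B.lam 0 = 1 := by
  ext b
  rw [lam_apply, ← B.one_eq_zero, B.one_circ, B.one_eq_zero, sub_zero]
  rfl

theorem lam_circ (a b : A) : B.lam (B.circ a b) = B.lam a * B.lam b := by
  ext c
  have h := B.circ_add a (B.circ b c - b) b
  rw [sub_add_cancel, ← B.circ_assoc] at h
  show B.circ (B.circ a b) c - B.circ a b = B.circ a (B.circ b c - b) - a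
  rw [eq_sub_of_add_eq h]
  abel

theorem lam_circ_apply (a b c : A) : B.lam (B.circ a b) c = B.lam a (B.lam b c) := by
  rw [lam_circ]
  rfl

structure Circ (B : LeftBrace A) where
  val : A

instance : Mul B.Circ := ⟨fun x y => ⟨B.circ x.val y.val⟩⟩
instance : One B.Circ := ⟨⟨B.one⟩⟩
instance : Inv B.Circ := ⟨fun x => ⟨B.inv x.val⟩⟩

instance : Group B.Circ :=
  Group.ofLeftAxioms
    (fun a b c => congrArg Circ.mk (B.circ_assoc a.val b.val c.val))
    (fun a => congrArg Circ.mk (B.one_circ a.val))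
    (fun a => congrArg Circ.mk (B.inv_circ a.val))

theorem card_circ : Nat.card B.Circ = Nat.card A :=
  Nat.card_congr ⟨Circ.val, Circ.mk, fun _ => rfl, fun _ => rfl⟩

def lamHom : B.Circ →* AddMonoid.End A where
  toFun g := B.lam g.val
  map_one' := by
    show B.lam B.one = 1
    rw [one_eq_zero, lam_zero]
  map_mul' g h := B.lam_circ g.val h.val

instance : DistribMulAction B.Circ A := DistribMulAction.compHom A B.lamHom

theorem lam_lam_inv_apply (a y : A) : B.lam a (B.lam (B.inv a) y) = y :=
  DFunLike.congr_fun (map_mul_eq_one B.lamHom (mul_inv_cancel (⟨a⟩ : B.Circ))) y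

theorem circ_lam_inv_sub (x x' : A) : B.circ x' (B.lam (B.inv x') (x - x')) = x := by
  rw [circ_eq_add_lam, lam_lam_inv_apply, add_sub_cancel]

theorem lam_circPow (v : A) (m : ℕ) : B.lam (circPow B v m) = B.lam v ^ m := by
  induction m with
  | zero => rw [circPow, one_eq_zero, lam_zero, pow_zero]
  | succ m ih => rw [circPow, lam_circ, ih, pow_succ']

theorem circPow_eq_geom_sum_apply (v : A) (m : ℕ) :
    circPow B v m = (∑ j ∈ range m, B.lam v ^ j) v := by
  induction m with
  | zero => simp [circPow, one_eq_zero]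
  | succ m ih =>
    have h : ∑ j ∈ range (m + 1), B.lam v ^ j = 1 + B.lam v * ∑ j ∈ range m, B.lam v ^ j := by
      simp only [sum_range_succ', mul_sum, pow_succ', pow_zero, add_comm]
    rw [circPow, circ_eq_add_lam, ih, h]
    rfl

theorem star_lam (g x y : A) : B.star x (B.lam g y) = B.star (B.circ x g) y - B.star g y := by
  rw [star_eq_lam_sub, star_eq_lam_sub, star_eq_lam_sub, lam_circ_apply]
  abel

/-- `y ∈ B.upperStarSeries i` iff `x₁ * (x₂ * ⋯ * (xᵢ * y)) = 0` for all `x₁, …, xᵢ`. -/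
def upperStarSeries : ℕ → AddSubgroup A
  | 0 => ⊥
  | i + 1 => ⨅ x : A, (upperStarSeries i).comap (B.lam x - 1)

theorem mem_upperStarSeries_succ {i : ℕ} {y : A} :
    y ∈ B.upperStarSeries (i + 1) ↔ ∀ x, B.star x y ∈ B.upperStarSeries i := by
  simp only [upperStarSeries, AddSubgroup.mem_iInf, AddSubgroup.mem_comap]
  rfl

theorem lam_mem_upperStarSeries (g : A) {i : ℕ} {y : A} (hy : y ∈ B.upperStarSeries i) :
    B.lam g y ∈ B.upperStarSeries i := by
  cases i with
  | zero =>
    rw [upperStarSeries, AddSubgroup.mem_bot] at hy ⊢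
    rw [hy, map_zero]
  | succ i =>
    rw [mem_upperStarSeries_succ] at hy ⊢
    intro x
    rw [star_lam]
    exact sub_mem (hy _) (hy _)

theorem lam_sub_one_mem_upperStarSeries (x : A) {i : ℕ} {y : A}
    (hy : y ∈ B.upperStarSeries i) : (B.lam x - 1) y ∈ B.upperStarSeries i :=
  sub_mem (B.lam_mem_upperStarSeries x hy) hy

theorem lam_sub_one_pow_mem_upperStarSeries (x : A) (k : ℕ) {i : ℕ} {y : A}
    (hy : y ∈ B.upperStarSeries i) : ((B.lam x - 1) ^ k) y ∈ B.upperStarSeries i := by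
  induction k with
  | zero => exact hy
  | succ k ih =>
    rw [pow_succ']
    exact B.lam_sub_one_mem_upperStarSeries x ih

theorem upperStarSeries_le_succ (i : ℕ) : B.upperStarSeries i ≤ B.upperStarSeries (i + 1) :=
  fun _ hy => B.mem_upperStarSeries_succ.mpr fun x => B.lam_sub_one_mem_upperStarSeries x hy

theorem lam_sub_one_pow_apply_eq_zero (x : A) {i : ℕ} {y : A} (hy : y ∈ B.upperStarSeries i) :
    ((B.lam x - 1) ^ i) y = 0 := by
  induction i generalizing y with
  | zero => exact AddSubgroup.mem_bot.mp hy
  | succ i ih => exact ih (B.mem_upperStarSeries_succ.mp hy x)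

section PrimePower

variable {p n : ℕ} (hp : p.Prime) (hcard : Nat.card A = p ^ n)
include hp hcard

theorem exists_mem_upperStarSeries_succ_notMem {i : ℕ} (hi : B.upperStarSeries i ≠ ⊤) :
    ∃ y ∈ B.upperStarSeries (i + 1), y ∉ B.upperStarSeries i := by
  have : Fact p.Prime := ⟨hp⟩
  have : Finite A := Nat.finite_of_card_ne_zero (by simp [hcard, hp.ne_zero])
  have hG : IsPGroup p B.Circ := IsPGroup.of_card (B.card_circ.trans hcard)
  have hdvd : p ∣ (B.upperStarSeries i).index :=
    hp.dvd_of_ne_one_of_dvd_pow (hcard ▸ AddSubgroup.index_dvd_card _)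
      (mt AddSubgroup.index_eq_one.mp hi)
  obtain ⟨y, hy, hfix⟩ := hG.exists_smul_sub_mem_of_dvd_index _
    (fun g _ => B.lam_mem_upperStarSeries g.val) hdvd
  exact ⟨y, B.mem_upperStarSeries_succ.mpr fun x => hfix ⟨x⟩, hy⟩

theorem upperStarSeries_eq_top_or_pow_dvd_card (i : ℕ) :
    B.upperStarSeries i = ⊤ ∨ p ^ i ∣ Nat.card (B.upperStarSeries i) := by
  induction i with
  | zero => exact Or.inr (by simp)
  | succ i ih =>
    refine or_iff_not_imp_left.mpr fun htop => ?_
    have hi : B.upperStarSeries i ≠ ⊤ := fun h =>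
      htop (top_unique (h ▸ B.upperStarSeries_le_succ i))
    obtain ⟨y, hy, hy'⟩ := B.exists_mem_upperStarSeries_succ_notMem hp hcard hi
    have hindex : p ∣ (B.upperStarSeries i).relIndex (B.upperStarSeries (i + 1)) :=
      hp.dvd_of_ne_one_of_dvd_pow
        ((AddSubgroup.relIndex_dvd_card _ _).trans
          (hcard ▸ AddSubgroup.card_addSubgroup_dvd_card _))
        (fun h => hy' (AddSubgroup.relIndex_eq_one.mp h hy))
    rw [← AddSubgroup.relIndex_bot_left, ← AddSubgroup.relIndex_mul_relIndex ⊥ _ _ bot_le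
      (B.upperStarSeries_le_succ i), AddSubgroup.relIndex_bot_left, pow_succ]
    exact mul_dvd_mul (ih.resolve_left hi) hindex

theorem upperStarSeries_eq_top : B.upperStarSeries n = ⊤ := by
  refine (B.upperStarSeries_eq_top_or_pow_dvd_card hp hcard n).elim id fun h => ?_
  have : Finite A := Nat.finite_of_card_ne_zero (by simp [hcard, hp.ne_zero])
  exact AddSubgroup.eq_top_of_card_eq _ (Nat.dvd_antisymm
    (AddSubgroup.card_addSubgroup_dvd_card _) (hcard ▸ h))

theorem lam_sub_one_pow_eq_zero (x : A) : (B.lam x - 1) ^ n = 0 := by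
  ext y
  exact B.lam_sub_one_pow_apply_eq_zero x
    (B.upperStarSeries_eq_top hp hcard ▸ AddSubgroup.mem_top y)

theorem star_mem_annSub (hnp : n < p) {s : ℕ} {x : A} (hx : x ∈ annSub A (p ^ s)) (b : A) :
    B.star x b ∈ annSub A (p ^ s) := by
  set μ := B.lam x - 1
  have hμn : μ ^ n = 0 := B.lam_sub_one_pow_eq_zero hp hcard x
  obtain ⟨c, hc⟩ := exists_geom_sum_one_add_eq hp hnp hμn s
  have hT := isUnit_one_add_mul_sum_smul_pow ⟨n, hμn⟩ c (p ^ s)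
  have hlam : B.lam x = 1 + μ := (add_sub_cancel 1 _).symm
  have hcircPow : circPow B x (p ^ s) = 0 := by
    rw [circPow_eq_geom_sum_apply, hlam, hc]
    exact map_mem_annSub _ hx
  have h : (∑ j ∈ range (p ^ s), B.lam x ^ j) * μ = 0 := by
    rw [geom_sum_mul, ← lam_circPow, hcircPow, lam_zero, sub_self]
  rw [hlam, hc, smul_mul_assoc, ← mul_smul_comm] at h
  exact DFunLike.congr_fun (hT.mul_right_eq_zero.mp h) b

theorem star_sub_star_mem_annSub (hnp : n < p) {s : ℕ} {x x' : A} (h : x - x' ∈ annSub A (p ^ s))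
    (z : A) : B.star x z - B.star x' z ∈ annSub A (p ^ s) := by
  set y := B.lam (B.inv x') (x - x')
  have hxy : B.circ x' y = x := B.circ_lam_inv_sub x x'
  have hstar : B.star x z - B.star x' z = B.lam x' (B.star y z) := by
    rw [← hxy, star_eq_lam_sub, star_eq_lam_sub, star_eq_lam_sub, lam_circ_apply, map_sub]
    abel
  rw [hstar]
  exact map_mem_annSub _ (B.star_mem_annSub hp hcard hnp (map_mem_annSub _ h) z)

theorem exists_circPow_prime_eq (hnp : n < p) {j : ℕ} {v : A}
    (hv : v ∈ B.upperStarSeries (j + 1)) :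
    ∃ w ∈ B.upperStarSeries j, circPow B v p = p • (v + w) ∧
      ∃ ρ, B.lam (circPow B v p) = 1 + p • ρ := by
  obtain ⟨c, hc⟩ := exists_geom_sum_one_add_eq hp hnp (B.lam_sub_one_pow_eq_zero hp hcard v) 1
  rw [pow_one] at hc
  set μ := B.lam v - 1
  set Y := ∑ i ∈ range p, c i • μ ^ i
  have hlam : B.lam v = 1 + μ := (add_sub_cancel 1 _).symm
  have hY : Y v ∈ B.upperStarSeries (j + 1) := by
    rw [show Y v = ∑ i ∈ range p, c i • (μ ^ i) v from AddMonoidHom.finsetSum_apply _ _ _]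
    exact sum_mem fun i _ => nsmul_mem (B.lam_sub_one_pow_mem_upperStarSeries v i hv) _
  refine ⟨μ (Y v), B.mem_upperStarSeries_succ.mp hY v, ?_, (1 + μ * Y) * μ, ?_⟩
  · rw [circPow_eq_geom_sum_apply, hlam, hc]
    rfl
  · rw [lam_circPow, ← sub_eq_iff_eq_add', ← geom_sum_mul, hlam, hc, add_sub_cancel_left,
      smul_mul_assoc]

theorem exists_lam_nsmul_eq (hnp : n < p) {j : ℕ} {v : A} (hv : v ∈ B.upperStarSeries j) :
    ∃ Θ, B.lam (p • v) = 1 + p • Θ := by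
  induction j generalizing v with
  | zero => exact ⟨0, by simp [AddSubgroup.mem_bot.mp hv, lam_zero]⟩
  | succ j ih =>
    obtain ⟨w, hw, hX, ρ, hρ⟩ := B.exists_circPow_prime_eq hp hcard hnp hv
    set X := circPow B v p
    obtain ⟨Θ, hΘ⟩ := ih (B.lam_mem_upperStarSeries (B.inv X) (neg_mem hw))
    have hcirc : B.circ X (p • B.lam (B.inv X) (-w)) = p • v := by
      rw [← map_nsmul, show p • -w = p • v - X by rw [hX, smul_add, smul_neg]; abel,
        circ_lam_inv_sub]
    refine ⟨ρ + Θ + p • (ρ * Θ), ?_⟩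
    rw [← hcirc, lam_circ, hρ, hΘ, mul_add, mul_one, add_mul, one_mul, smul_mul_assoc,
      mul_smul_comm, nsmul_add, nsmul_add]
    abel

theorem exists_star_nsmul_eq (hnp : n < p) (a : A) :
    ∃ Θ : AddMonoid.End A, ∀ b, B.star (p • a) b = p • Θ b := by
  obtain ⟨Θ, hΘ⟩ :=
    B.exists_lam_nsmul_eq hp hcard hnp (B.upperStarSeries_eq_top hp hcard ▸ AddSubgroup.mem_top a)
  refine ⟨Θ, fun b => ?_⟩
  rw [← lam_sub_one_apply, hΘ, add_sub_cancel_left]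
  rfl

end PrimePower

end LeftBrace

/-- `(p·a)*b ∈ pA`, and `[a]⊙[b] = [℘⁻¹((p·a)*b)]` is well defined on
`A/ann(p²)`. -/
theorem stmt_2 (p n : ℕ) (hp : p.Prime) (hpn : n + 1 < p)
    (A : Type u) [AddCommGroup A] (B : LeftBrace A) (hcard : Nat.card A = p ^ n) :
    (∀ a b : A, ∃ c : A, p • c = B.star (p • a) b) ∧
    (∀ a a' b b' c c' : A,
      a - a' ∈ annSub A (p ^ 2) → b - b' ∈ annSub A (p ^ 2) →
      p • c = B.star (p • a) b → p • c' = B.star (p • a') b' →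
      c - c' ∈ annSub A (p ^ 2)) := by
  have hnp : n < p := by omega
  refine ⟨fun a b => ?_, fun a a' b b' c c' ha hb hc hc' => ?_⟩
  · obtain ⟨Θ, hΘ⟩ := B.exists_star_nsmul_eq hp hcard hnp a
    exact ⟨Θ b, (hΘ b).symm⟩
  obtain ⟨Θ, hΘ⟩ := B.exists_star_nsmul_eq hp hcard hnp a
  have hb' : p • B.star (p • a) (b - b') = 0 := by
    rw [hΘ, smul_smul, ← sq, ← map_nsmul]
    exact (congrArg Θ hb).trans (map_zero Θ)
  have ha' : p • (B.star (p • a) b' - B.star (p • a') b') = 0 := by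
    have h : p • a - p • a' ∈ annSub A (p ^ 1) := by
      rw [mem_annSub, ← smul_sub, smul_smul, pow_one, ← sq]
      exact ha
    simpa only [pow_one, mem_annSub] using B.star_sub_star_mem_annSub hp hcard hnp h b'
  calc p ^ 2 • (c - c') = p • (p • c - p • c') := by rw [sq, mul_smul, smul_sub]
    _ = p • B.star (p • a) (b - b') + p • (B.star (p • a) b' - B.star (p • a') b') := by
      rw [hc, hc', ← smul_add, B.star_sub_right, sub_add_sub_cancel]
    _ = 0 := by rw [hb', ha', add_zero]
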